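/- (Proposition 2, inclusion part.) Let A_K ∈ ℝ^{n×n}, μ_ω ∈ ℝⁿ, let Σ_ω ∈ ℝ^{n×n} be positive semidefinite, let s_0 ∈ ℝⁿ and ε ∈ (0,1). Define μ_0 = s_0, Σ_0 = 0, μ_{k+1} = A_K μ_k + μ_ω, Σ_{k+1} = A_K Σ_k A_Kᵀ + Σ_ω, and the sets R^ε_0 = {s_0}, R^ε_{k+1} = A_K R^ε_k ⊕ E(Σ_ω, μ_ω, n/ε). Then for every k ≥ 1, E(Σ_k, μ_k, n/ε) ⊆ R^ε_k. -/

import Mathlib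

open MeasureTheory Matrix Pointwise
open scoped Classical

/-- The positive semidefinite square root of a matrix (junk value `0` if the matrix is not
positive semidefinite). -/
noncomputable def msqrt {n : ℕ} (M : Matrix (Fin n) (Fin n) ℝ) : Matrix (Fin n) (Fin n) ℝ :=
  if h : M.PosSemidef then
    (h.1.eigenvectorUnitary : Matrix (Fin n) (Fin n) ℝ) * diagonal (Real.sqrt ∘ h.1.eigenvalues) *
      (star h.1.eigenvectorUnitary : Matrix (Fin n) (Fin n) ℝ)
  else 0

/-- The ellipsoid `E(M, c, r) = {c + M^{1/2} x : xᵀ x ≤ r}` with shape matrix `M`,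
center `c` and radius `√r`. -/
noncomputable def ellipsoid {n : ℕ} (M : Matrix (Fin n) (Fin n) ℝ) (c : Fin n → ℝ) (r : ℝ) :
    Set (Fin n → ℝ) :=
  {x | ∃ y : Fin n → ℝ, y ⬝ᵥ y ≤ r ∧ x = c + (msqrt M).mulVec y}

variable {n : ℕ}

lemma contOn (T : Matrix (Fin n) (Fin n) ℝ) (f : ℝ → ℝ) :
    ContinuousOn f (spectrum ℝ T) := by
  rw [continuousOn_iff_continuous_restrict]; fun_prop

noncomputable def pinv (T : Matrix (Fin n) (Fin n) ℝ) : Matrix (Fin n) (Fin n) ℝ :=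
  cfc (fun x : ℝ => x⁻¹) T

noncomputable def mproj (T : Matrix (Fin n) (Fin n) ℝ) : Matrix (Fin n) (Fin n) ℝ :=
  cfc (fun x : ℝ => if x = 0 then 0 else 1) T

lemma cfc_mul' (T : Matrix (Fin n) (Fin n) ℝ) (f g : ℝ → ℝ) :
    cfc f T * cfc g T = cfc (fun x => f x * g x) T :=
  (cfc_mul f g T (contOn T f) (contOn T g)).symm

lemma self_eq_cfc {T : Matrix (Fin n) (Fin n) ℝ} (hT : T.PosSemidef) :
    T = cfc (fun x : ℝ => x) T := (cfc_id' ℝ T hT.1.isSelfAdjoint).symm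

section ident
variable {T : Matrix (Fin n) (Fin n) ℝ} (hT : T.PosSemidef)

/-- helper for pointwise-real identities -/
lemma resolve (x : ℝ) : x * x⁻¹ = if x = 0 then 0 else 1 := by
  rcases eq_or_ne x 0 with h | h <;> simp [h, mul_inv_cancel₀]

-- L1 : T * T * pinv T = T
lemma L1 (hT : T.PosSemidef) : T * T * pinv T = T := by
  have e := self_eq_cfc hT
  have h : T * T * pinv T
      = cfc (fun x : ℝ => x) T * cfc (fun x : ℝ => x) T * cfc (fun x : ℝ => x⁻¹) T := by
    rw [pinv, ← e]
  rw [h, cfc_mul', cfc_mul']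
  conv_rhs => rw [e]
  apply cfc_congr; intro x _
  rcases eq_or_ne x 0 with h | h <;> field_simp [h]

lemma L2 (hT : T.PosSemidef) : pinv T * (T * T) * pinv T = mproj T := by
  have e := self_eq_cfc hT
  have h : pinv T * (T * T) * pinv T
      = cfc (fun x : ℝ => x⁻¹) T * (cfc (fun x : ℝ => x) T * cfc (fun x : ℝ => x) T)
        * cfc (fun x : ℝ => x⁻¹) T := by
    rw [pinv, ← e]
  rw [h, cfc_mul', cfc_mul', cfc_mul', mproj]
  apply cfc_congr; intro x _
  rcases eq_or_ne x 0 with h | h <;> field_simp [h] <;> simp [h]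

lemma L3 (hT : T.PosSemidef) : T * T * pinv T * pinv T * T = T := by
  have e := self_eq_cfc hT
  have h : T * T * pinv T * pinv T * T
      = cfc (fun x : ℝ => x) T * cfc (fun x : ℝ => x) T * cfc (fun x : ℝ => x⁻¹) T
        * cfc (fun x : ℝ => x⁻¹) T * cfc (fun x : ℝ => x) T := by
    rw [pinv, ← e]
  rw [h, cfc_mul', cfc_mul', cfc_mul', cfc_mul']
  conv_rhs => rw [e]
  apply cfc_congr; intro x _
  rcases eq_or_ne x 0 with h | h <;> field_simp [h]

lemma L4 (hT : T.PosSemidef) :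
    T * pinv T * pinv T * (T * T) * pinv T * pinv T * T = mproj T := by
  have e := self_eq_cfc hT
  have h : T * pinv T * pinv T * (T * T) * pinv T * pinv T * T
      = cfc (fun x : ℝ => x) T * cfc (fun x : ℝ => x⁻¹) T * cfc (fun x : ℝ => x⁻¹) T
        * (cfc (fun x : ℝ => x) T * cfc (fun x : ℝ => x) T) * cfc (fun x : ℝ => x⁻¹) T
        * cfc (fun x : ℝ => x⁻¹) T * cfc (fun x : ℝ => x) T := by
    rw [pinv, ← e]
  rw [h, cfc_mul', cfc_mul', cfc_mul', cfc_mul', cfc_mul', cfc_mul', cfc_mul', mproj]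
  apply cfc_congr; intro x _
  rcases eq_or_ne x 0 with h | h <;> field_simp [h] <;> simp [h]

lemma mproj_sq : mproj T * mproj T = mproj T := by
  rw [mproj, cfc_mul']
  apply cfc_congr; intro x _
  rcases eq_or_ne x 0 with h | h <;> simp [h]

lemma mproj_transpose : (mproj T)ᵀ = mproj T := by
  have h : IsSelfAdjoint (mproj T) := cfc_predicate _ T
  simpa [star_eq_conjTranspose, conjTranspose_eq_transpose_of_trivial] using h.star_eq

lemma pinv_transpose : (pinv T)ᵀ = pinv T := by
  have h : IsSelfAdjoint (pinv T) := cfc_predicate _ T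
  simpa [star_eq_conjTranspose, conjTranspose_eq_transpose_of_trivial] using h.star_eq

lemma dot_sq (A : Matrix (Fin n) (Fin n) ℝ) (y : Fin n → ℝ) :
    (A.mulVec y) ⬝ᵥ (A.mulVec y) = y ⬝ᵥ ((Aᵀ * A).mulVec y) := by
  rw [← mulVec_mulVec, dotProduct_mulVec, ← mulVec_transpose, dotProduct_comm]

lemma mproj_dot_le (hT : T.PosSemidef) (y : Fin n → ℝ) : y ⬝ᵥ (mproj T).mulVec y ≤ y ⬝ᵥ y := by
  set P := mproj T
  have h0 : 0 ≤ (y - P.mulVec y) ⬝ᵥ (y - P.mulVec y) := by simpa using dotProduct_self_star_nonneg (R := ℝ) (y - P.mulVec y)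
  have h1 : (P.mulVec y) ⬝ᵥ (P.mulVec y) = y ⬝ᵥ P.mulVec y := by
    rw [dot_sq, mproj_transpose, mproj_sq]
  have h2 : (P.mulVec y) ⬝ᵥ y = y ⬝ᵥ P.mulVec y := dotProduct_comm _ _
  rw [sub_dotProduct, dotProduct_sub, dotProduct_sub, h1, h2] at h0
  linarith

end ident

lemma msqrt_eq {M : Matrix (Fin n) (Fin n) ℝ} (hM : M.PosSemidef) : msqrt M = cfc Real.sqrt M := by
  rw [msqrt, dif_pos hM, hM.1.cfc_eq, IsHermitian.cfc]
  simp [Unitary.conjStarAlgAut_apply, Function.comp_def]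

open scoped MatrixOrder in
lemma msqrt_posSemidef {M : Matrix (Fin n) (Fin n) ℝ} (hM : M.PosSemidef) :
    (msqrt M).PosSemidef := by
  rw [msqrt_eq hM, ← nonneg_iff_posSemidef]; exact cfc_nonneg (fun x _ => Real.sqrt_nonneg x)

open scoped MatrixOrder in
lemma msqrt_mul_self {M : Matrix (Fin n) (Fin n) ℝ} (hM : M.PosSemidef) :
    msqrt M * msqrt M = M := by
  rw [msqrt_eq hM, ← cfc_mul Real.sqrt Real.sqrt M]
  conv_rhs => rw [← cfc_id' ℝ M hM.1.isSelfAdjoint]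
  have h0 : 0 ≤ M := nonneg_iff_posSemidef.mpr hM
  apply cfc_congr; intro x hx
  exact Real.mul_self_sqrt (spectrum_nonneg_of_nonneg h0 hx)

lemma psd_transpose_eq {M : Matrix (Fin n) (Fin n) ℝ} (hM : M.PosSemidef) : Mᵀ = M := by
  rw [← conjTranspose_eq_transpose_of_trivial]; exact hM.1

lemma quad_nonneg {M : Matrix (Fin n) (Fin n) ℝ} (hM : M.PosSemidef) (y : Fin n → ℝ) :
    0 ≤ y ⬝ᵥ M.mulVec y := by simpa using hM.dotProduct_mulVec_nonneg y


lemma psd_conj {M : Matrix (Fin n) (Fin n) ℝ} (hM : M.PosSemidef)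
    (B : Matrix (Fin n) (Fin n) ℝ) : (B * M * Bᵀ).PosSemidef := by
  have := hM.mul_mul_conjTranspose_same B
  rwa [conjTranspose_eq_transpose_of_trivial] at this

lemma ellipsoid_add_subset {M N : Matrix (Fin n) (Fin n) ℝ} (hM : M.PosSemidef)
    (hN : N.PosSemidef) (c d : Fin n → ℝ) (r : ℝ) :
    ellipsoid (M + N) (c + d) r ⊆ ellipsoid M c r + ellipsoid N d r := by
  rintro x ⟨y, hy, rfl⟩
  have hMN : (M + N).PosSemidef := hM.add hN
  set S := msqrt (M + N) with hSdef
  have hS : S.PosSemidef := msqrt_posSemidef hMN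
  have hSS : S * S = M + N := msqrt_mul_self hMN
  set W := pinv S with hWdef
  set u := (msqrt M * W).mulVec y with hu
  set v := (msqrt N * W).mulVec y with hv
  have key : ∀ (X : Matrix (Fin n) (Fin n) ℝ), X.PosSemidef →
      (msqrt X * W).mulVec y ⬝ᵥ (msqrt X * W).mulVec y = y ⬝ᵥ (W * X * W).mulVec y := by
    intro X hX
    rw [dot_sq, transpose_mul, pinv_transpose, psd_transpose_eq (msqrt_posSemidef hX)]
    congr 2
    rw [← mul_assoc, mul_assoc W, msqrt_mul_self hX]
  have hproj : W * (M + N) * W = mproj S := by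
    rw [← hSS, hWdef]
    exact L2 hS
  have expand : W * (M + N) * W = W * M * W + W * N * W := by
    rw [mul_add, add_mul]
  have hbound : ∀ (X Y : Matrix (Fin n) (Fin n) ℝ), X.PosSemidef → Y.PosSemidef →
      X + Y = M + N → (msqrt X * W).mulVec y ⬝ᵥ (msqrt X * W).mulVec y ≤ r := by
    intro X Y hX hY hXY
    rw [key X hX]
    have h1 : y ⬝ᵥ (W * X * W).mulVec y + y ⬝ᵥ (W * Y * W).mulVec y
        = y ⬝ᵥ (mproj S).mulVec y := by
      rw [← hproj, ← hXY, mul_add, add_mul, add_mulVec, dotProduct_add]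
    have h2 : 0 ≤ y ⬝ᵥ (W * Y * W).mulVec y := quad_nonneg (by
      have := psd_conj hY W
      rwa [pinv_transpose] at this) y
    have h3 := mproj_dot_le hS y
    linarith
  have hMu : (msqrt M).mulVec u = (M * W).mulVec y := by
    rw [hu, mulVec_mulVec, ← mul_assoc, msqrt_mul_self hM]
  have hNv : (msqrt N).mulVec v = (N * W).mulVec y := by
    rw [hv, mulVec_mulVec, ← mul_assoc, msqrt_mul_self hN]
  have hsum : (msqrt M).mulVec u + (msqrt N).mulVec v = S.mulVec y := by
    rw [hMu, hNv, ← add_mulVec, ← add_mul, ← hSS, hWdef, L1 hS]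
  have hx : c + d + S.mulVec y = (c + (msqrt M).mulVec u) + (d + (msqrt N).mulVec v) := by
    rw [← hsum]; abel
  rw [hx]
  exact Set.add_mem_add ⟨u, hbound M N hM hN rfl, rfl⟩
    ⟨v, hbound N M hN hM (by rw [add_comm]), rfl⟩

lemma ellipsoid_map_subset (A : Matrix (Fin n) (Fin n) ℝ) {Sg : Matrix (Fin n) (Fin n) ℝ}
    (hSg : Sg.PosSemidef) (μ0 : Fin n → ℝ) (r : ℝ) :
    ellipsoid (A * Sg * Aᵀ) (A.mulVec μ0) r ⊆ A.mulVec '' ellipsoid Sg μ0 r := by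
  rintro x ⟨y, hy, rfl⟩
  have hASg : (A * Sg * Aᵀ).PosSemidef := psd_conj hSg A
  set T := msqrt (A * Sg * Aᵀ) with hTdef
  have hT : T.PosSemidef := msqrt_posSemidef hASg
  set B := A * msqrt Sg with hB
  have hBBt : B * Bᵀ = T * T := by
    rw [hB, transpose_mul, psd_transpose_eq (msqrt_posSemidef hSg), msqrt_mul_self hASg,
      mul_assoc, ← mul_assoc (msqrt Sg), msqrt_mul_self hSg, ← mul_assoc]
  set W := pinv T with hW
  set C := Bᵀ * W * W * T with hC
  set u := C.mulVec y with hu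
  refine ⟨μ0 + (msqrt Sg).mulVec u, ⟨u, ?_, rfl⟩, ?_⟩
  · -- norm bound
    rw [hu, dot_sq]
    have h1 : Cᵀ * C = T * pinv T * pinv T * (B * Bᵀ) * pinv T * pinv T * T := by
      rw [hC, hW]
      simp only [transpose_mul, transpose_transpose, psd_transpose_eq hT,
        pinv_transpose, mul_assoc]
    have hCt : Cᵀ * C = mproj T := by rw [h1, hBBt]; exact L4 hT
    rw [hCt]
    exact le_trans (mproj_dot_le hT y) hy
  · -- image equality
    rw [mulVec_add, hu, mulVec_mulVec, mulVec_mulVec]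
    congr 1
    rw [← hB, hC]
    have him : B * (Bᵀ * W * W * T) = T := by
      have h1 : B * (Bᵀ * W * W * T) = B * Bᵀ * pinv T * pinv T * T := by
        rw [hW]; noncomm_ring
      rw [h1, hBBt]; exact L3 hT
    rw [him]


/-- **Proposition 2, inclusion part.** With `μ_0 = s_0`, `Σ_0 = 0`,
`μ_{k+1} = A_K μ_k + μ_ω`, `Σ_{k+1} = A_K Σ_k A_Kᵀ + Σ_ω`, `R^ε_0 = {s_0}` and
`R^ε_{k+1} = A_K R^ε_k ⊕ E(Σ_ω, μ_ω, n/ε)`, for every `k ≥ 1`,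
`E(Σ_k, μ_k, n/ε) ⊆ R^ε_k`. -/
theorem ellipsoid_subset_reach {n : ℕ}
    (AK : Matrix (Fin n) (Fin n) ℝ) (μω : Fin n → ℝ)
    (Sω : Matrix (Fin n) (Fin n) ℝ) (hSω : Sω.PosSemidef)
    (s0 : Fin n → ℝ) (ε : ℝ) (hε : ε ∈ Set.Ioo (0 : ℝ) 1)
    (μ : ℕ → Fin n → ℝ) (hμ0 : μ 0 = s0) (hμ : ∀ k, μ (k + 1) = AK.mulVec (μ k) + μω)
    (Sk : ℕ → Matrix (Fin n) (Fin n) ℝ)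
    (hSk0 : Sk 0 = 0) (hSk : ∀ k, Sk (k + 1) = AK * Sk k * AKᵀ + Sω)
    (R : ℕ → Set (Fin n → ℝ)) (hR0 : R 0 = {s0})
    (hR : ∀ k, R (k + 1) = AK.mulVec '' R k + ellipsoid Sω μω ((n : ℝ) / ε)) :
    ∀ k, 1 ≤ k → ellipsoid (Sk k) (μ k) ((n : ℝ) / ε) ⊆ R k := by

  have hpsd : ∀ k, (Sk k).PosSemidef := by
    intro k; induction k with
    | zero => rw [hSk0]; exact Matrix.PosSemidef.zero
    | succ k ih => rw [hSk k]; exact (psd_conj ih AK).add hSω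
  have main : ∀ k, ellipsoid (Sk k) (μ k) ((n : ℝ) / ε) ⊆ R k := by
    intro k; induction k with
    | zero =>
      rw [hSk0, hμ0, hR0]
      rintro x ⟨y, hy, rfl⟩
      have hz : (0 : Matrix (Fin n) (Fin n) ℝ).PosSemidef := Matrix.PosSemidef.zero
      have h0 : msqrt (0 : Matrix (Fin n) (Fin n) ℝ) = 0 := by
        rw [msqrt_eq hz]; simp
      simp [h0]
    | succ k ih =>
      rw [hSk k, hμ k, hR k]
      refine subset_trans (ellipsoid_add_subset (psd_conj (hpsd k) AK) hSω _ _ _) ?_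
      exact Set.add_subset_add
        (subset_trans (ellipsoid_map_subset AK (hpsd k) _ _) (Set.image_mono ih)) subset_rfl
  exact fun k _ => main k
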